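/- arXiv:1411.6817 — 5 statements merged into one kernel-verified Lean document; each statement's English description precedes it below -/
import Mathlib

section
/- If a countable group G contains a free subgroup on two generators, then G is not amenable. -/
namespace NAAux

lemma toWord_cons_mul (ℓ : Fin 2 × Bool) (x : FreeGroup (Fin 2)) :
    (FreeGroup.mk [ℓ] * x).toWord =
      List.casesOn x.toWord [ℓ] fun hd tl =>
        if ℓ.1 = hd.1 ∧ ℓ.2 = !hd.2 then tl else ℓ :: hd :: tl := by
  conv_lhs => rw [← FreeGroup.mk_toWord (x := x), FreeGroup.mul_mk]
  rw [show ([ℓ] ++ x.toWord) = ℓ :: x.toWord from rfl, FreeGroup.toWord_mk,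
    FreeGroup.reduce.cons, FreeGroup.reduce_toWord]

lemma head_mul (i : Fin 2) (b : Bool) (x : FreeGroup (Fin 2)) :
    (FreeGroup.mk [(i, b)] * x).toWord.head? = some (i, b) ↔
      x.toWord.head? ≠ some (i, !b) := by
  rw [toWord_cons_mul]
  cases h : x.toWord with
  | nil => simp
  | cons hd tl =>
    dsimp only
    by_cases hc : (i, b).1 = hd.1 ∧ (i, b).2 = !hd.2
    · obtain ⟨h1, h2⟩ := hc
      obtain ⟨j, c⟩ := hd
      simp only at h1 h2
      subst h1
      have hb : c = !b := by simp [h2]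
      subst hb
      rw [if_pos (by simp)]
      constructor
      · intro htl
        -- tl.head? = some (i,b) contradicts reducedness
        exfalso
        cases tl with
        | nil => simp at htl
        | cons hd2 tl2 =>
          simp at htl
          subst htl
          have : FreeGroup.reduce x.toWord = [] ++ (i, !b) :: (i, !(!b)) :: tl2 := by
            rw [FreeGroup.reduce_toWord, h]; simp
          exact FreeGroup.reduce.not this
      · intro hne; simp at hne
    · rw [if_neg hc]
      simp only [List.head?_cons, Option.some.injEq, true_iff]
      intro hcon
      apply hc
      obtain ⟨j, c⟩ := hd
      simp at hcon
      obtain ⟨rfl, rfl⟩ := hcon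
      simp

end NAAux

/-- A countable (discrete) group is amenable if `ℓ^∞(G,ℝ)` (realized as the bounded
continuous functions on `G` with the discrete topology) admits a left-invariant mean:
a linear functional `ν` with `⨅ g, f g ≤ ν f ≤ ⨆ g, f g` and `ν (f ∘ (g⁻¹ * ·)) = ν f`. -/
def Amenable (G : Type*) [Group G] : Prop :=
  letI : TopologicalSpace G := ⊥
  ∃ ν : BoundedContinuousFunction G ℝ →ₗ[ℝ] ℝ,
    (∀ f : BoundedContinuousFunction G ℝ, (⨅ g : G, f g) ≤ ν f ∧ ν f ≤ ⨆ g : G, f g) ∧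
    (∀ (g : G) (f : BoundedContinuousFunction G ℝ),
      ν (f.compContinuous ⟨fun h => g⁻¹ * h, continuous_bot⟩) = ν f)


/-- If a countable group `G` contains a free subgroup on two generators,
then `G` is not amenable. -/
theorem not_amenable_of_free_subgroup (G : Type*) [Group G] [Countable G]
    (φ : FreeGroup (Fin 2) →* G) (hφ : Function.Injective φ) :
    ¬ Amenable G := by
  classical
  letI : TopologicalSpace G := ⊥
  rintro ⟨ν, hmean, hinv⟩
  -- Setoid of orbits of the F₂-action on G via φ
  let s : Setoid G := ⟨fun g g' => ∃ x : FreeGroup (Fin 2), φ x * g' = g,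
    ⟨fun g => ⟨1, by simp⟩,
     fun {g g'} h => by
        obtain ⟨x, hx⟩ := h
        exact ⟨x⁻¹, by rw [← hx, ← mul_assoc, ← map_mul]; simp⟩,
     fun {g g' g''} h1 h2 => by
        obtain ⟨x, hx⟩ := h1; obtain ⟨y, hy⟩ := h2
        exact ⟨x * y, by rw [map_mul, mul_assoc, hy, hx]⟩⟩⟩
  have hrepex : ∀ g : G, ∃ x : FreeGroup (Fin 2), φ x * (Quotient.mk s g).out = g := by
    intro g
    obtain ⟨x, hx⟩ := Quotient.mk_out (s := s) g
    exact ⟨x⁻¹, by rw [← hx, ← mul_assoc, ← map_mul]; simp⟩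
  let w : G → FreeGroup (Fin 2) := fun g => (hrepex g).choose
  have hw : ∀ g : G, φ (w g) * (Quotient.mk s g).out = g := fun g => (hrepex g).choose_spec
  have hout : ∀ (y : FreeGroup (Fin 2)) (g : G),
      (Quotient.mk s (φ y * g)).out = (Quotient.mk s g).out := by
    intro y g; congr 1; exact Quotient.sound ⟨y, rfl⟩
  have hweq : ∀ (y : FreeGroup (Fin 2)) (g : G), w (φ y * g) = y * w g := by
    intro y g
    have h1 := hw (φ y * g)
    rw [hout y g] at h1
    have h2 := hw g
    have h3 : φ (w (φ y * g)) * (Quotient.mk s g).out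
        = φ (y * w g) * (Quotient.mk s g).out := by
      rw [map_mul, mul_assoc, h2, h1]
    exact hφ (mul_right_cancel h3)
  -- indicator functions
  let ind : Set (FreeGroup (Fin 2)) → BoundedContinuousFunction G ℝ := fun S =>
    BoundedContinuousFunction.ofNormedAddCommGroup
      (fun g => if w g ∈ S then (1:ℝ) else 0) continuous_bot 1
      (fun g => by dsimp; split <;> simp)
  have hind : ∀ S (g : G), ind S g = if w g ∈ S then (1:ℝ) else 0 := fun _ _ => rfl
  let μ : Set (FreeGroup (Fin 2)) → ℝ := fun S => ν (ind S)
  have hnn : ∀ S, 0 ≤ μ S := by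
    intro S
    refine le_trans (Real.iInf_nonneg fun g => ?_) (hmean (ind S)).1
    rw [hind]; split <;> norm_num
  have huniv : μ Set.univ = 1 := by
    obtain ⟨h1, h2⟩ := hmean (ind Set.univ)
    have he : ∀ g : G, ind Set.univ g = 1 := fun g => by simp [hind]
    simp only [he, ciInf_const, ciSup_const] at h1 h2
    exact le_antisymm h2 h1
  have hadd : ∀ S T, Disjoint S T → μ (S ∪ T) = μ S + μ T := by
    intro S T hST
    have : ind (S ∪ T) = ind S + ind T := by
      ext g
      rw [BoundedContinuousFunction.add_apply, hind, hind, hind]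
      by_cases hS : w g ∈ S <;> by_cases hT : w g ∈ T
      · exact absurd hT (Set.disjoint_left.mp hST hS)
      · simp [hS, hT]
      · simp [hS, hT]
      · simp [hS, hT]
    show ν _ = _
    rw [this, map_add]
  have hcompl : ∀ S, μ Sᶜ = 1 - μ S := by
    intro S
    have := hadd S Sᶜ disjoint_compl_right
    rw [Set.union_compl_self, huniv] at this
    linarith
  have hinv' : ∀ (y : FreeGroup (Fin 2)) S, μ {z | y⁻¹ * z ∈ S} = μ S := by
    intro y S
    have h1 := hinv (φ y) (ind S)
    have h2 : (ind S).compContinuous ⟨fun h => (φ y)⁻¹ * h, continuous_bot⟩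
        = ind {z | y⁻¹ * z ∈ S} := by
      ext g
      show ind S ((φ y)⁻¹ * g) = _
      rw [hind, hind]
      have : (φ y)⁻¹ * g = φ y⁻¹ * g := by rw [map_inv]
      rw [this, hweq]
      rfl
    rw [h2] at h1
    exact h1
  -- the sets of reduced words by first letter
  let T : Fin 2 → Bool → Set (FreeGroup (Fin 2)) := fun i b =>
    {x | x.toWord.head? = some (i, b)}
  have hkey : ∀ (i : Fin 2) (b : Bool),
      {z | (FreeGroup.mk [(i, b)])⁻¹ * z ∈ T i (!b)} = (T i b)ᶜ := by
    intro i b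
    ext z
    have := NAAux.head_mul i b ((FreeGroup.mk [(i, b)])⁻¹ * z)
    rw [mul_inv_cancel_left] at this
    simp only [Set.mem_setOf_eq, Set.mem_compl_iff, T]
    tauto
  have hμT : ∀ (i : Fin 2) (b : Bool), μ (T i (!b)) = 1 - μ (T i b) := by
    intro i b
    rw [← hinv' (FreeGroup.mk [(i, b)]) (T i (!b)), hkey, hcompl]
  have hTdisj : ∀ (i : Fin 2) (b : Bool) (j : Fin 2) (c : Bool),
      (i, b) ≠ (j, c) → Disjoint (T i b) (T j c) := by
    intro i b j c hne
    rw [Set.disjoint_left]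
    intro x h1 h2
    rw [Set.mem_setOf_eq] at h1 h2
    exact hne (Option.some.inj (h1.symm.trans h2))
  have hEdisj : ∀ (i : Fin 2) (b : Bool), Disjoint ({(1 : FreeGroup (Fin 2))} : Set _) (T i b) := by
    intro i b
    rw [Set.disjoint_left]
    intro x h1 h2
    rw [Set.mem_singleton_iff] at h1
    rw [Set.mem_setOf_eq, h1] at h2
    simp at h2
  have hcover : (Set.univ : Set (FreeGroup (Fin 2))) =
      {(1 : FreeGroup (Fin 2))} ∪ ((T 0 true ∪ T 0 false) ∪ (T 1 true ∪ T 1 false)) := by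
    ext x
    simp only [Set.mem_univ, true_iff, Set.mem_union, Set.mem_singleton_iff, Set.mem_setOf_eq, T]
    cases hx : x.toWord.head? with
    | none =>
      left
      rw [List.head?_eq_none_iff, FreeGroup.toWord_eq_nil_iff] at hx
      exact hx
    | some p =>
      right
      obtain ⟨i, b⟩ := p
      fin_cases i <;> cases b <;> simp_all
  -- put it together
  have hdUV : Disjoint (T 0 true ∪ T 0 false) (T 1 true ∪ T 1 false) := by
    apply Disjoint.union_left <;> apply Disjoint.union_right <;>
      exact hTdisj _ _ _ _ (by simp)
  have hdE : Disjoint ({(1 : FreeGroup (Fin 2))} : Set _)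
      ((T 0 true ∪ T 0 false) ∪ (T 1 true ∪ T 1 false)) := by
    apply Disjoint.union_right <;> apply Disjoint.union_right <;> exact hEdisj _ _
  have e1 : μ (T 0 true ∪ T 0 false) = 1 := by
    rw [hadd _ _ (hTdisj 0 true 0 false (by simp))]
    have := hμT 0 true
    simp only [Bool.not_true] at this
    linarith
  have e2 : μ (T 1 true ∪ T 1 false) = 1 := by
    rw [hadd _ _ (hTdisj 1 true 1 false (by simp))]
    have := hμT 1 true
    simp only [Bool.not_true] at this
    linarith
  have efin : (1 : ℝ) = μ {(1 : FreeGroup (Fin 2))} + 2 := by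
    rw [← huniv, hcover, hadd _ _ hdE, hadd _ _ hdUV, e1, e2]
    ring
  have := hnn {(1 : FreeGroup (Fin 2))}
  linarith
end

section
/- A countable group of subexponential growth is amenable. Precisely, if G is generated by a finite symmetric set S with lim_{n→∞} |B_S(n)|^{1/n} = 1, where B_S(n) is the ball of radius n in the word metric, then G satisfies the Følner criterion: for every ε > 0 and finite F₀ ⊆ G there exists a finite F ⊆ G with |F ∩ gF| ≥ (1−ε)|F| for all g ∈ F₀. -/
/-!
Choose `k` with `F₀ ⊆ B k`. If `|B (n + k)| > (1 + ε) |B n|` held for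
every `n`, the balls would grow like `(1 + ε)^(n / k)`, contradicting `|B n|^(1/n) → 1`. So some
`n` has `|B (n + k)| ≤ (1 + ε) |B n|`, and `F = B n` works: for `g ∈ F₀` both `F` and `gF` lie in
`B (n + k)`, hence `|F ∩ gF| = 2|F| - |F ∪ gF| ≥ (1 - ε)|F|`.
-/

open Filter Topology Pointwise Finset

section WordBall

variable {G : Type*} [Group G]

def wordBall (S : Set G) (n : ℕ) : Set G :=
  {g | ∃ l : List G, l.length ≤ n ∧ (∀ x ∈ l, x ∈ S) ∧ l.prod = g}

variable {S : Set G}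

theorem one_mem_wordBall (S : Set G) (n : ℕ) : (1 : G) ∈ wordBall S n :=
  ⟨[], by simp⟩

theorem wordBall_mono (S : Set G) : Monotone (wordBall S) :=
  fun _ _ hnm _ ⟨l, hl, hlS, hlp⟩ => ⟨l, hl.trans hnm, hlS, hlp⟩

theorem mul_mem_wordBall {k n : ℕ} {g x : G} (hg : g ∈ wordBall S k) (hx : x ∈ wordBall S n) :
    g * x ∈ wordBall S (k + n) := by
  obtain ⟨l, hl, hlS, rfl⟩ := hg
  obtain ⟨l', hl', hlS', rfl⟩ := hx
  refine ⟨l ++ l', by simp only [List.length_append]; omega, ?_, List.prod_append⟩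
  simpa only [List.mem_append, or_imp, forall_and] using ⟨hlS, hlS'⟩

theorem wordBall_zero (S : Set G) : wordBall S 0 = {1} := by
  ext g
  simp [wordBall, eq_comm]

theorem wordBall_succ (S : Set G) (n : ℕ) :
    wordBall S (n + 1) = insert 1 (S * wordBall S n) := by
  ext g
  constructor
  · rintro ⟨_ | ⟨s, l⟩, hl, hlS, rfl⟩
    · exact Set.mem_insert _ _
    · refine Set.mem_insert_of_mem _ (Set.mul_mem_mul (hlS s (by simp)) ⟨l, ?_, ?_, rfl⟩)
      · simpa using hl
      · exact fun x hx => hlS x (List.mem_cons_of_mem s hx)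
  · rintro (rfl | ⟨s, hs, x, hx, rfl⟩)
    · exact one_mem_wordBall S _
    · rw [add_comm]
      exact mul_mem_wordBall ⟨[s], by simp, by simpa using hs, by simp⟩ hx

theorem wordBall_finite (hS : S.Finite) (n : ℕ) : (wordBall S n).Finite := by
  induction n with
  | zero => simp [wordBall_zero]
  | succ n ih => simpa only [wordBall_succ] using (hS.mul ih).insert 1

theorem wordBall_union_smul_subset {g : G} {k : ℕ} (hg : g ∈ wordBall S k) (n : ℕ) :
    wordBall S n ∪ g • wordBall S n ⊆ wordBall S (n + k) := by
  rintro x (hx | ⟨y, hy, rfl⟩)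
  · exact wordBall_mono S (Nat.le_add_right n k) hx
  · rw [add_comm]
    exact mul_mem_wordBall hg hy

theorem exists_mem_wordBall (hsymm : ∀ s ∈ S, s⁻¹ ∈ S) {g : G}
    (hg : g ∈ Subgroup.closure S) : ∃ n, g ∈ wordBall S n := by
  have hS : S ∪ S⁻¹ = S := Set.union_eq_left.2 fun s hs => by simpa using hsymm _ hs
  rw [← Subgroup.mem_toSubmonoid, Subgroup.closure_toSubmonoid, hS] at hg
  obtain ⟨l, hlS, hlp⟩ := Submonoid.exists_list_of_mem_closure hg
  exact ⟨l.length, l, le_rfl, hlS, hlp⟩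

theorem exists_forall_mem_wordBall (hsymm : ∀ s ∈ S, s⁻¹ ∈ S)
    (hgen : Subgroup.closure S = ⊤) (F₀ : Finset G) : ∃ k, ∀ g ∈ F₀, g ∈ wordBall S k := by
  choose n hn using fun g : G => exists_mem_wordBall hsymm (hgen ▸ Subgroup.mem_top g)
  exact ⟨F₀.sup n, fun g hg => wordBall_mono S (Finset.le_sup hg) (hn g)⟩

end WordBall

section Growth

variable {a : ℕ → ℝ}

theorem eventually_lt_pow_of_tendsto_rpow_one
    (h : Tendsto (fun n : ℕ => a n ^ ((1 : ℝ) / n)) atTop (𝓝 1)) (ha : ∀ n, 0 ≤ a n)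
    {ρ : ℝ} (hρ : 1 < ρ) : ∀ᶠ n in atTop, a n < ρ ^ n := by
  filter_upwards [h.eventually (gt_mem_nhds hρ), eventually_ge_atTop 1] with n hn hn1
  calc a n = (a n ^ ((1 : ℝ) / n)) ^ n := by
        rw [one_div, Real.rpow_inv_natCast_pow (ha n) (by omega)]
    _ < ρ ^ n := pow_lt_pow_left₀ hn (Real.rpow_nonneg (ha n) _) (by omega)

theorem pow_mul_le_of_forall_mul_le {r : ℝ} (hr : 0 ≤ r) {k : ℕ}
    (h : ∀ n, r * a n ≤ a (n + k)) (m : ℕ) : r ^ m * a 0 ≤ a (m * k) := by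
  induction m with
  | zero => simp
  | succ m ih =>
    calc r ^ (m + 1) * a 0 = r * (r ^ m * a 0) := by ring
      _ ≤ r * a (m * k) := mul_le_mul_of_nonneg_left ih hr
      _ ≤ a (m * k + k) := h _
      _ = a ((m + 1) * k) := by rw [add_mul, one_mul]

theorem exists_add_le_mul_of_tendsto_rpow_one
    (h : Tendsto (fun n : ℕ => a n ^ ((1 : ℝ) / n)) atTop (𝓝 1)) (ha : ∀ n, 0 ≤ a n)
    (ha₀ : 1 ≤ a 0) {r : ℝ} (hr : 1 < r) {k : ℕ} (hk : 0 < k) : ∃ n, a (n + k) ≤ r * a n := by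
  by_contra! hlt
  set ρ := r ^ (k⁻¹ : ℝ)
  have hρ : 1 < ρ := Real.one_lt_rpow hr (inv_pos.2 (Nat.cast_pos.2 hk))
  have hρk : ρ ^ k = r := Real.rpow_inv_natCast_pow (by linarith) hk.ne'
  obtain ⟨N, hN⟩ := eventually_atTop.1 (eventually_lt_pow_of_tendsto_rpow_one h ha hρ)
  have hupper : a (N * k) < r ^ N := by
    simpa only [pow_mul', hρk] using hN (N * k) (Nat.le_mul_of_pos_right N hk)
  have hlower := pow_mul_le_of_forall_mul_le (by linarith) (fun n => (hlt n).le) N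
  have : r ^ N ≤ r ^ N * a 0 := le_mul_of_one_le_right (by positivity) ha₀
  linarith

end Growth

theorem le_card_inter_of_card_union_le {α : Type*} [DecidableEq α] {s t : Finset α} {ε : ℝ}
    (hst : #t = #s) (hcard : (#(s ∪ t) : ℝ) ≤ (1 + ε) * #s) : (1 - ε) * #s ≤ #(s ∩ t) := by
  have hsum : #(s ∪ t) + #(s ∩ t) = 2 * #s := by rw [card_union_add_card_inter, hst, two_mul]
  have hsum' : (#(s ∪ t) : ℝ) + #(s ∩ t) = 2 * #s := by exact_mod_cast hsum
  linarith

open scoped Classical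

theorem folner_of_subexponential_growth_general
    {G : Type*} [Group G] (S : Finset G)
    (hsymm : ∀ s ∈ S, s⁻¹ ∈ S)
    (hgen : Subgroup.closure (S : Set G) = ⊤)
    (B : ℕ → Set G)
    (hB : ∀ n, B n = {g : G | ∃ l : List G, l.length ≤ n ∧ (∀ x ∈ l, x ∈ S) ∧ l.prod = g})
    (hgrowth : Filter.Tendsto (fun n : ℕ => (Nat.card (B n) : ℝ) ^ ((1 : ℝ) / n))
      Filter.atTop (nhds 1)) :
    ∀ ε > (0 : ℝ), ∀ F₀ : Finset G, ∃ F : Finset G, F.Nonempty ∧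
      ∀ g ∈ F₀, (1 - ε) * (F.card : ℝ) ≤ ((F ∩ F.image (fun x => g * x)).card : ℝ) := by
  intro ε hε F₀
  obtain rfl : B = wordBall S := funext hB
  have hfin := wordBall_finite S.finite_toSet
  obtain ⟨k, hk⟩ := exists_forall_mem_wordBall hsymm hgen F₀
  obtain ⟨n, hn⟩ := exists_add_le_mul_of_tendsto_rpow_one hgrowth
    (fun _ => Nat.cast_nonneg _) (by simp [wordBall_zero]) (lt_add_of_pos_right 1 hε) k.succ_pos
  refine ⟨(hfin n).toFinset, ⟨1, by simp [one_mem_wordBall]⟩, fun g hg =>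
    le_card_inter_of_card_union_le (card_image_of_injective _ (mul_right_injective g)) ?_⟩
  have hsub : (hfin n).toFinset ∪ (hfin n).toFinset.image (g * ·) ⊆
      (hfin (n + (k + 1))).toFinset := by
    rw [← Finset.coe_subset]
    push_cast
    simp only [Set.Finite.coe_toFinset, ← smul_eq_mul, Set.image_smul]
    exact wordBall_union_smul_subset (wordBall_mono _ k.le_succ (hk g hg)) n
  calc (#((hfin n).toFinset ∪ (hfin n).toFinset.image (g * ·)) : ℝ)
      ≤ Nat.card (wordBall (S : Set G) (n + (k + 1))) := by
        rw [Nat.card_eq_card_finite_toFinset (hfin _)]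
        exact_mod_cast card_le_card hsub
    _ ≤ (1 + ε) * Nat.card (wordBall (S : Set G) n) := hn
    _ = (1 + ε) * #(hfin n).toFinset := by rw [Nat.card_eq_card_finite_toFinset (hfin _)]

/-- A countable group of subexponential growth satisfies the Følner
criterion. Here `B S n` is the ball of radius `n` in the word metric determined by the
finite symmetric generating set `S`. -/
theorem folner_of_subexponential_growth
    {G : Type*} [Group G] [Countable G] (S : Finset G)
    (hsymm : ∀ s ∈ S, s⁻¹ ∈ S)
    (hgen : Subgroup.closure (S : Set G) = ⊤)
    (B : ℕ → Set G)
    (hB : ∀ n, B n = {g : G | ∃ l : List G, l.length ≤ n ∧ (∀ x ∈ l, x ∈ S) ∧ l.prod = g})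
    (hgrowth : Filter.Tendsto (fun n : ℕ => (Nat.card (B n) : ℝ) ^ ((1 : ℝ) / n))
      Filter.atTop (nhds 1)) :
    ∀ ε > (0 : ℝ), ∀ F₀ : Finset G, ∃ F : Finset G, F.Nonempty ∧
      ∀ g ∈ F₀, (1 - ε) * (F.card : ℝ) ≤ ((F ∩ F.image (fun x => g * x)).card : ℝ) :=
  folner_of_subexponential_growth_general S hsymm hgen B hB hgrowth
end

section
/- Let σ̃(x,g) = (σx, g·ψ(x)) be a skew product of a subshift of finite type by a countable group G, with cocycle ψ_n(x) = ψ(x)ψ(σx)⋯ψ(σ^{n−1}x). Define Q_n = {x : σⁿx = x, ψ_n(x) = 1_G} and P_n = {(x,g) : σ̃ⁿ(x,g) = (x,g) and σ̃^m(x,g) ∈ Σ_A⁺ × {1_G} for some 0 ≤ m < n}. Then #Q_n ≤ #P_n ≤ n · #Q_n. -/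
/-- For the skew product `σ̃(x,g) = (σx, g·ψ(x))` of a subshift of finite
type by a countable group `G`, with `Q_n = {x : σⁿx = x, ψ_n(x) = 1}` and
`P_n = {(x,g) : σ̃ⁿ(x,g) = (x,g), σ̃^m(x,g) ∈ Σ_A⁺ × {1} for some 0 ≤ m < n}`,
one has `#Q_n ≤ #P_n ≤ n · #Q_n`. -/
theorem skew_product_periodic_counting
    {S : Type*} [Fintype S] (A : S → S → Bool) {G : Type*} [Group G] [Countable G]
    (σ : {x : ℕ → S // ∀ n, A (x n) (x (n + 1)) = true} →
      {x : ℕ → S // ∀ n, A (x n) (x (n + 1)) = true})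
    (hσ : ∀ x n, (σ x).1 n = x.1 (n + 1))
    (ψ : {x : ℕ → S // ∀ n, A (x n) (x (n + 1)) = true} → G)
    (hψ : ∀ x y, x.1 0 = y.1 0 → x.1 1 = y.1 1 → ψ x = ψ y)
    (σtilde : {x : ℕ → S // ∀ n, A (x n) (x (n + 1)) = true} × G →
      {x : ℕ → S // ∀ n, A (x n) (x (n + 1)) = true} × G)
    (hσtilde : ∀ x g, σtilde (x, g) = (σ x, g * ψ x))
    (n : ℕ) (hn : 1 ≤ n)
    (Qn : Set {x : ℕ → S // ∀ n, A (x n) (x (n + 1)) = true})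
    (hQn : Qn = {x | σ^[n] x = x ∧ ((List.range n).map (fun i => ψ (σ^[i] x))).prod = 1})
    (Pn : Set ({x : ℕ → S // ∀ n, A (x n) (x (n + 1)) = true} × G))
    (hPn : Pn = {p | σtilde^[n] p = p ∧ ∃ m < n, (σtilde^[m] p).2 = 1})
    (hQfin : Qn.Finite) (hPfin : Pn.Finite) :
    Qn.ncard ≤ Pn.ncard ∧ Pn.ncard ≤ n * Qn.ncard := by
  classical
  -- Key formula for iterates of the skew product
  have key : ∀ x (g : G) (m : ℕ),
      σtilde^[m] (x, g) = (σ^[m] x, g * ((List.range m).map (fun i => ψ (σ^[i] x))).prod) := by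
    intro x g m
    induction m with
    | zero => simp
    | succ m ih =>
      rw [Function.iterate_succ_apply', ih, hσtilde, List.range_succ, List.map_append,
        List.prod_append, Function.iterate_succ_apply']
      simp [mul_assoc]
  have hmem : ∀ q ∈ Pn, σtilde^[n] q = q ∧ ∃ m, m < n ∧ (σtilde^[m] q).2 = 1 := by
    intro q hq
    rw [hPn] at hq
    exact ⟨hq.1, hq.2⟩
  constructor
  · -- x ↦ (x, 1) injects Qn into Pn
    refine Set.ncard_le_ncard_of_injOn (fun x => (x, (1 : G))) ?_ ?_ hPfin
    · intro x hx
      rw [hQn] at hx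
      rw [hPn]
      refine ⟨?_, 0, hn, rfl⟩
      rw [key, hx.1, hx.2, mul_one]
    · intro a _ b _ h
      exact congrArg Prod.fst h
  · -- inject Pn into Fin n × Qn
    have hex : ∀ p : Pn, ∃ m, m < n ∧ (σtilde^[m] p.1).2 = 1 := fun p => (hmem p.1 p.2).2
    choose m hm h1 using hex
    have hper : ∀ p : Pn, σtilde^[n] p.1 = p.1 := fun p => (hmem p.1 p.2).1
    -- the point after m steps has trivial group part
    have heq : ∀ p : Pn, σtilde^[m p] p.1 = ((σtilde^[m p] p.1).1, 1) := by
      intro p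
      exact Prod.ext rfl (h1 p)
    have hiter : ∀ p : Pn, σtilde^[n] (σtilde^[m p] p.1) = σtilde^[m p] p.1 := by
      intro p
      rw [← Function.iterate_add_apply, Nat.add_comm, Function.iterate_add_apply, hper p]
    have hyQ : ∀ p : Pn, (σtilde^[m p] p.1).1 ∈ Qn := by
      intro p
      have h := hiter p
      rw [heq p, key] at h
      have h1' := congrArg Prod.fst h
      have h2' := congrArg Prod.snd h
      simp only at h1' h2'
      rw [hQn]
      refine ⟨h1', ?_⟩
      rw [one_mul] at h2'
      exact h2'
    set F : Pn → Fin n × Qn := fun p => (⟨m p, hm p⟩, ⟨(σtilde^[m p] p.1).1, hyQ p⟩) with hF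
    have hFinj : Function.Injective F := by
      intro p q h
      have hm' : m p = m q := by
        have := congrArg (fun z => (z.1 : ℕ)) h
        simpa [hF] using this
      have hy : (σtilde^[m p] p.1).1 = (σtilde^[m q] q.1).1 := by
        have := congrArg (fun z => (z.2 : _)) h
        simpa [hF] using this
      have hsame : σtilde^[m p] p.1 = σtilde^[m q] q.1 := by
        rw [heq p, heq q, hy]
      have hrec : ∀ r : Pn, σtilde^[n - m r] (σtilde^[m r] r.1) = r.1 := by
        intro r
        rw [← Function.iterate_add_apply, Nat.sub_add_cancel (le_of_lt (hm r)), hper r]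
      have : p.1 = q.1 := by
        rw [← hrec p, ← hrec q, hsame, hm']
      exact Subtype.ext this
    have hQsub : Finite Qn := hQfin.to_subtype
    have hcard : Nat.card Pn ≤ Nat.card (Fin n × Qn) :=
      Nat.card_le_card_of_injective F hFinj
    calc Pn.ncard = Nat.card Pn := (Nat.card_coe_set_eq Pn).symm
      _ ≤ Nat.card (Fin n × Qn) := hcard
      _ = n * Qn.ncard := by
          simp [Nat.card_prod, Nat.card_coe_set_eq]
end

section
/- In the setting of the previous skew product, for every real s and every n ≥ 1: ∑_{x ∈ Q_n} e^{−s rⁿ(x)} ≤ ∑_{(x,g) ∈ P_n} e^{−s rⁿ(x)} ≤ n · ∑_{x ∈ Q_n} e^{−s rⁿ(x)}, where rⁿ is the n-th Birkhoff sum of a function r : Σ_A⁺ → ℝ. -/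
/-- In the setting of the skew product `σ̃(x,g) = (σx, g·ψ(x))`, for every
real `s` and every `n ≥ 1`,
`∑_{x ∈ Q_n} e^{−s rⁿ(x)} ≤ ∑_{(x,g) ∈ P_n} e^{−s rⁿ(x)} ≤ n ∑_{x ∈ Q_n} e^{−s rⁿ(x)}`,
where `rⁿ` is the `n`-th Birkhoff sum of `r`. -/
theorem skew_product_weighted_periodic_sums
    {S : Type*} [Fintype S] (A : S → S → Bool) {G : Type*} [Group G] [Countable G]
    (σ : {x : ℕ → S // ∀ n, A (x n) (x (n + 1)) = true} →
      {x : ℕ → S // ∀ n, A (x n) (x (n + 1)) = true})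
    (hσ : ∀ x n, (σ x).1 n = x.1 (n + 1))
    (ψ : {x : ℕ → S // ∀ n, A (x n) (x (n + 1)) = true} → G)
    (hψ : ∀ x y, x.1 0 = y.1 0 → x.1 1 = y.1 1 → ψ x = ψ y)
    (σtilde : {x : ℕ → S // ∀ n, A (x n) (x (n + 1)) = true} × G →
      {x : ℕ → S // ∀ n, A (x n) (x (n + 1)) = true} × G)
    (hσtilde : ∀ x g, σtilde (x, g) = (σ x, g * ψ x))
    (r : {x : ℕ → S // ∀ n, A (x n) (x (n + 1)) = true} → ℝ)
    (n : ℕ) (hn : 1 ≤ n) (s : ℝ)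
    (Qn : Set {x : ℕ → S // ∀ n, A (x n) (x (n + 1)) = true})
    (hQn : Qn = {x | σ^[n] x = x ∧ ((List.range n).map (fun i => ψ (σ^[i] x))).prod = 1})
    (Pn : Set ({x : ℕ → S // ∀ n, A (x n) (x (n + 1)) = true} × G))
    (hPn : Pn = {p | σtilde^[n] p = p ∧ ∃ m < n, (σtilde^[m] p).2 = 1})
    (hQfin : Qn.Finite) (hPfin : Pn.Finite) :
    (∑ x ∈ hQfin.toFinset, Real.exp (-s * ∑ i ∈ Finset.range n, r (σ^[i] x)))
        ≤ ∑ p ∈ hPfin.toFinset, Real.exp (-s * ∑ i ∈ Finset.range n, r (σ^[i] p.1)) ∧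
      (∑ p ∈ hPfin.toFinset, Real.exp (-s * ∑ i ∈ Finset.range n, r (σ^[i] p.1)))
        ≤ n * ∑ x ∈ hQfin.toFinset, Real.exp (-s * ∑ i ∈ Finset.range n, r (σ^[i] x)) := by
  classical
  set Ψ : ℕ → {x : ℕ → S // ∀ n, A (x n) (x (n + 1)) = true} → G :=
    fun k x => ((List.range k).map (fun i => ψ (σ^[i] x))).prod with hΨ
  have iter : ∀ (k : ℕ) x (g : G), σtilde^[k] (x, g) = (σ^[k] x, g * Ψ k x) := by
    intro k
    induction k with
    | zero => intro x g; simp [hΨ]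
    | succ k ih =>
      intro x g
      rw [Function.iterate_succ_apply', ih, hσtilde, Function.iterate_succ_apply']
      simp [hΨ, List.range_succ, mul_assoc]
  set f : {x : ℕ → S // ∀ n, A (x n) (x (n + 1)) = true} → ℝ :=
    fun x => Real.exp (-s * ∑ i ∈ Finset.range n, r (σ^[i] x)) with hf
  have hmaps : ∀ x ∈ hQfin.toFinset, (x, (1 : G)) ∈ hPfin.toFinset := by
    intro x hx
    rw [Set.Finite.mem_toFinset, hQn] at hx
    rw [Set.Finite.mem_toFinset, hPn]
    refine ⟨?_, 0, hn, ?_⟩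
    · rw [iter, hx.1]
      have := hx.2
      simp only [hΨ] at *
      rw [this, mul_one]
    · simp
  have hproj : ∀ p ∈ hPfin.toFinset, p.1 ∈ hQfin.toFinset := by
    intro p hp
    rw [Set.Finite.mem_toFinset, hPn] at hp
    rw [Set.Finite.mem_toFinset, hQn]
    obtain ⟨x, g⟩ := p
    simp only [Set.mem_setOf_eq] at hp ⊢
    rw [iter] at hp
    obtain ⟨h1, -⟩ := hp
    have h2 : σ^[n] x = x := congrArg Prod.fst h1
    have h3 : g * Ψ n x = g := congrArg Prod.snd h1
    have h4 : Ψ n x = 1 := mul_left_cancel (a := g) (by rw [h3, mul_one])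
    exact ⟨h2, by simpa [hΨ] using h4⟩
  constructor
  · have himg : ∑ x ∈ hQfin.toFinset, f x
        = ∑ p ∈ hQfin.toFinset.image (fun x => (x, (1 : G))), f p.1 := by
      rw [Finset.sum_image (by intro a _ b _ h; exact ((Prod.mk.injEq _ _ _ _).mp h).1)]
    rw [show (fun p : {x : ℕ → S // ∀ n, A (x n) (x (n + 1)) = true} × G =>
        Real.exp (-s * ∑ i ∈ Finset.range n, r (σ^[i] p.1))) = fun p => f p.1 from rfl]
    rw [himg]
    refine Finset.sum_le_sum_of_subset_of_nonneg ?_ (fun _ _ _ => (Real.exp_pos _).le)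
    intro p hp
    obtain ⟨x, hx, rfl⟩ := Finset.mem_image.mp hp
    exact hmaps x hx
  · calc ∑ p ∈ hPfin.toFinset, f p.1
        = ∑ x ∈ hQfin.toFinset,
            ∑ p ∈ hPfin.toFinset.filter (fun p => p.1 = x), f p.1 :=
          (Finset.sum_fiberwise_of_maps_to hproj _).symm
      _ ≤ ∑ x ∈ hQfin.toFinset, (n : ℝ) * f x := by
          refine Finset.sum_le_sum ?_
          intro x hx
          have hsub : hPfin.toFinset.filter (fun p => p.1 = x)
              ⊆ (Finset.range n).image (fun m => (x, (Ψ m x)⁻¹)) := by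
            intro p hp
            rw [Finset.mem_filter, Set.Finite.mem_toFinset, hPn] at hp
            obtain ⟨⟨-, m, hm, hm1⟩, hpx⟩ := hp
            obtain ⟨y, g⟩ := p
            simp only at hpx
            subst hpx
            rw [iter] at hm1
            simp only at hm1
            exact Finset.mem_image.mpr ⟨m, Finset.mem_range.mpr hm,
              by rw [eq_inv_of_mul_eq_one_left hm1]⟩
          have hcard : ((hPfin.toFinset.filter (fun p => p.1 = x)).card : ℝ) ≤ n := by
            have : (hPfin.toFinset.filter (fun p => p.1 = x)).card ≤ n :=
              le_trans (Finset.card_le_card hsub) (le_trans Finset.card_image_le (by simp))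
            exact_mod_cast this
          calc ∑ p ∈ hPfin.toFinset.filter (fun p => p.1 = x), f p.1
              = ∑ p ∈ hPfin.toFinset.filter (fun p => p.1 = x), f x :=
                Finset.sum_congr rfl (fun p hp => by rw [(Finset.mem_filter.mp hp).2])
            _ = ((hPfin.toFinset.filter (fun p => p.1 = x)).card : ℝ) * f x := by
                rw [Finset.sum_const, nsmul_eq_mul]
            _ ≤ (n : ℝ) * f x :=
                mul_le_mul_of_nonneg_right hcard (Real.exp_pos _).le
      _ = n * ∑ x ∈ hQfin.toFinset, f x := by rw [Finset.mul_sum]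
end

section
/- Let (a_T) be the counting function a(T) = #{γ : l(γ) ≤ T} for a countable set of positive lengths with a(T) finite for all T, and suppose limsup_{T→∞} (1/T) log a(T) = δ > 0. Then for any c > 0, limsup_{T→∞} (1/T) log #{γ : T−c < l(γ) ≤ T} = δ. -/
open Filter

private lemma log_nat_mono {m n : ℕ} (h : m ≤ n) : Real.log m ≤ Real.log n := by
  rcases Nat.eq_zero_or_pos m with hm | hm
  · simp only [hm, Nat.cast_zero, Real.log_zero]
    exact Real.log_natCast_nonneg n
  · exact Real.log_le_log (by exact_mod_cast hm) (by exact_mod_cast h)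

/-- If the counting function `a(T) = #{γ : l(γ) ≤ T}` of a countable
family of positive lengths is finite for all `T` and has exponential growth rate
`limsup (1/T) log a(T) = δ > 0`, then for every `c > 0` the annular counts
`#{γ : T−c < l(γ) ≤ T}` have the same exponential growth rate `δ`. -/
theorem annular_counting_same_growth
    (l : ℕ → ℝ) (hl : ∀ γ, 0 < l γ)
    (hfin : ∀ T : ℝ, {γ : ℕ | l γ ≤ T}.Finite)
    (δ : ℝ) (hδ : 0 < δ)
    (hgrowth : Filter.limsup
      (fun T : ℝ => (1 / T) * Real.log (Nat.card {γ : ℕ // l γ ≤ T})) Filter.atTop = δ) :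
    ∀ c : ℝ, 0 < c →
      Filter.limsup
        (fun T : ℝ => (1 / T) * Real.log (Nat.card {γ : ℕ // T - c < l γ ∧ l γ ≤ T}))
        Filter.atTop = δ := by
  intro c hc
  set A : ℝ → ℕ := fun T => Nat.card {γ : ℕ // l γ ≤ T} with hA
  set B : ℝ → ℕ := fun T => Nat.card {γ : ℕ // T - c < l γ ∧ l γ ≤ T} with hB
  set f : ℝ → ℝ := fun T => (1 / T) * Real.log (A T) with hf
  set g : ℝ → ℝ := fun T => (1 / T) * Real.log (B T) with hg
  -- basic counting facts
  have hBA : ∀ T : ℝ, B T ≤ A T := fun T => Nat.card_mono (hfin T) (fun γ h => h.2)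
  have hAmono : ∀ S T : ℝ, S ≤ T → A S ≤ A T := fun S T hST =>
    Nat.card_mono (hfin T) (fun γ h => le_trans h hST)
  -- nonnegativity, eventually
  have hg_ev0 : ∀ᶠ T in atTop, (0:ℝ) ≤ g T := by
    filter_upwards [eventually_ge_atTop (1:ℝ)] with T hT
    exact mul_nonneg (by positivity) (Real.log_natCast_nonneg _)
  have hf_ev0 : ∀ᶠ T in atTop, (0:ℝ) ≤ f T := by
    filter_upwards [eventually_ge_atTop (1:ℝ)] with T hT
    exact mul_nonneg (by positivity) (Real.log_natCast_nonneg _)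
  have hgle : ∀ᶠ T in atTop, g T ≤ f T := by
    filter_upwards [eventually_ge_atTop (1:ℝ)] with T hT
    exact mul_le_mul_of_nonneg_left (log_nat_mono (hBA T)) (by positivity)
  -- f is eventually bounded above (else limsup would be 0 ≠ δ)
  have hfbdd : IsBoundedUnder (· ≤ ·) atTop f := by
    by_contra h
    have hempty : {a : ℝ | ∀ᶠ T in atTop, f T ≤ a} = ∅ := by
      ext a
      simp only [Set.mem_setOf_eq, Set.mem_empty_iff_false, iff_false]
      exact fun ha => h (isBoundedUnder_of_eventually_le ha)
    have : limsup f atTop = δ := hgrowth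
    rw [Filter.limsup_eq, hempty, Real.sInf_empty] at this
    linarith
  have hgbdd : IsBoundedUnder (· ≤ ·) atTop g := by
    obtain ⟨b, hb⟩ := hfbdd
    rw [eventually_map] at hb
    exact isBoundedUnder_of_eventually_le (by filter_upwards [hgle, hb] with T h1 h2; linarith)
  have hgcob : IsCoboundedUnder (· ≤ ·) atTop g :=
    (isBoundedUnder_of_eventually_ge hg_ev0).isCoboundedUnder_le
  have hfcob : IsCoboundedUnder (· ≤ ·) atTop f :=
    (isBoundedUnder_of_eventually_ge hf_ev0).isCoboundedUnder_le
  -- upper bound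
  have hub : limsup g atTop ≤ δ := by
    rw [← hgrowth]
    exact limsup_le_limsup hgle hgcob hfbdd
  -- key frequently statement
  have key : ∀ ε : ℝ, 0 < ε → ε < δ → ∃ᶠ T in atTop, δ - ε ≤ g T := by
    intro ε hε hεδ
    rw [frequently_atTop]
    intro M0
    set M : ℝ := max M0 1 with hM
    have hM1 : (1:ℝ) ≤ M := le_max_right _ _
    set η : ℝ := min (ε/2) (δ - ε/2) with hη
    have hηpos : 0 < η := lt_min (by linarith) (by linarith)
    set K : ℝ := Real.log ((A M : ℝ) + 1) with hK
    set L : ℝ := Real.log (1/c + 1) with hL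
    have hKnn : 0 ≤ K := Real.log_nonneg (le_add_of_nonneg_left (Nat.cast_nonneg _))
    -- frequently f T > δ - ε/2
    have hfreq : ∃ᶠ T in atTop, δ - ε/2 < f T :=
      frequently_lt_of_lt_limsup hfcob (by rw [hgrowth]; linarith)
    -- eventual conditions
    have hev1 : ∀ᶠ T : ℝ in atTop, Real.log T ≤ (η/2) * T := by
      have := Asymptotics.isLittleO_iff.mp Real.isLittleO_log_id_atTop (half_pos hηpos)
      filter_upwards [this, eventually_ge_atTop (0:ℝ)] with T h1 h2
      calc Real.log T ≤ ‖Real.log T‖ := le_abs_self _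
        _ ≤ η/2 * ‖T‖ := h1
        _ = η/2 * T := by rw [Real.norm_eq_abs, abs_of_nonneg h2]
    have hev2 : ∀ᶠ T : ℝ in atTop, K + L ≤ (η/2) * T := by
      filter_upwards [eventually_ge_atTop ((K + L)/(η/2))] with T hT
      rw [div_le_iff₀ (half_pos hηpos)] at hT
      linarith [hT]
    have hev : ∀ᶠ T : ℝ in atTop, M ≤ T ∧ Real.log T + (K + L) ≤ η * T := by
      filter_upwards [eventually_ge_atTop M, hev1, hev2] with T h1 h2 h3
      exact ⟨h1, by linarith⟩
    obtain ⟨T, hfT, hMT, hlogT⟩ := (hfreq.and_eventually hev).exists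
    -- basic facts about T
    have hT1 : (1:ℝ) ≤ T := le_trans hM1 hMT
    have hTpos : (0:ℝ) < T := by linarith
    have hAT : (δ - ε/2) * T < Real.log (A T) := by
      have h0 := mul_lt_mul_of_pos_right hfT hTpos
      have heq : f T * T = Real.log (A T) := by
        rw [hf]; field_simp
      rw [heq] at h0
      linarith
    have hATpos : (0:ℝ) < Real.log (A T) :=
      lt_trans (mul_pos (by linarith) hTpos) hAT
    have hAT1 : 1 ≤ A T := by
      rcases Nat.eq_zero_or_pos (A T) with h | h
      · rw [h] at hATpos; simp at hATpos
      · exact h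
    -- covering argument
    set N : ℕ := ⌈T/c⌉₊ with hN
    have hNpos : 0 < N := Nat.ceil_pos.mpr (div_pos hTpos hc)
    have hBfin : ∀ S : ℝ, {γ : ℕ | S - c < l γ ∧ l γ ≤ S}.Finite :=
      fun S => (hfin S).subset (fun γ h => h.2)
    have hcover : (hfin T).toFinset ⊆
        (Finset.range N).biUnion (fun k => (hBfin (T - k*c)).toFinset) := by
      intro γ hγ
      rw [Set.Finite.mem_toFinset] at hγ
      simp only [Set.mem_setOf_eq] at hγ
      have hpos := hl γ
      set k : ℕ := ⌊(T - l γ)/c⌋₊ with hk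
      have hk0 : (0:ℝ) ≤ (T - l γ)/c := div_nonneg (by linarith) hc.le
      have hkle : (k:ℝ) ≤ (T - l γ)/c := Nat.floor_le hk0
      have hklt : (T - l γ)/c < (k:ℝ) + 1 := Nat.lt_floor_add_one _
      have hkN : k < N := by
        rw [hk, Nat.floor_lt hk0]
        have h1 : (T - l γ)/c < T/c := by gcongr <;> linarith
        exact lt_of_lt_of_le h1 (Nat.le_ceil _)
      refine Finset.mem_biUnion.mpr ⟨k, Finset.mem_range.mpr hkN, ?_⟩
      rw [Set.Finite.mem_toFinset]
      constructor
      · have h1 : T - l γ < ((k:ℝ) + 1) * c := (div_lt_iff₀ hc).mp hklt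
        nlinarith
      · have h2 : (k:ℝ) * c ≤ T - l γ := (le_div_iff₀ hc).mp hkle
        linarith
    -- pigeonhole: pick the annulus with maximal count
    obtain ⟨k₀, hk₀mem, hk₀max⟩ := Finset.exists_max_image (Finset.range N)
      (fun k => B (T - k*c)) ⟨0, Finset.mem_range.mpr hNpos⟩
    set S : ℝ := T - k₀*c with hS
    have hAsum : A T ≤ N * B S := by
      have h1 : A T = (hfin T).toFinset.card := Nat.card_eq_card_finite_toFinset _
      have h2 : (hfin T).toFinset.card ≤
          ((Finset.range N).biUnion (fun k => (hBfin (T - k*c)).toFinset)).card :=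
        Finset.card_le_card hcover
      have h3 : ((Finset.range N).biUnion (fun k => (hBfin (T - k*c)).toFinset)).card ≤
          ∑ k ∈ Finset.range N, ((hBfin (T - k*c)).toFinset).card :=
        Finset.card_biUnion_le
      have h4 : ∑ k ∈ Finset.range N, ((hBfin (T - k*c)).toFinset).card ≤ N * B S := by
        have := Finset.sum_le_card_nsmul (Finset.range N)
          (fun k => ((hBfin (T - k*c)).toFinset).card) (B S)
          (fun k hkmem => le_trans
            (le_of_eq (Nat.card_eq_card_finite_toFinset (hBfin (T - k*c))).symm)
            (hk₀max k hkmem))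
        simpa [Finset.card_range, smul_eq_mul] using this
      omega
    have hST : S ≤ T := by
      rw [hS]
      have : (0:ℝ) ≤ (k₀:ℝ) * c := by positivity
      linarith
    have hB1 : 1 ≤ B S := by
      rcases Nat.eq_zero_or_pos (B S) with h | h
      · rw [h, mul_zero] at hAsum; omega
      · exact h
    have hBSpos : (0:ℝ) < (B S : ℝ) := by exact_mod_cast hB1
    -- bound on log N
    have hNle : (N:ℝ) ≤ T/c + 1 := le_of_lt (Nat.ceil_lt_add_one (le_of_lt (div_pos hTpos hc)))
    have hlogN : Real.log N ≤ Real.log T + L := by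
      have h1 : Real.log N ≤ Real.log (T/c + 1) :=
        Real.log_le_log (by exact_mod_cast hNpos) hNle
      have h2 : T/c + 1 ≤ T * (1/c + 1) := by
        rw [mul_add, mul_one, mul_one_div]
        linarith
      have h3 : Real.log (T/c + 1) ≤ Real.log (T * (1/c + 1)) :=
        Real.log_le_log (by positivity) h2
      rw [Real.log_mul (ne_of_gt hTpos) (by positivity)] at h3
      linarith
    -- log A T ≤ log N + log B S
    have hlogsplit : Real.log (A T) ≤ Real.log N + Real.log (B S) := by
      have h1 : (A T : ℝ) ≤ (N : ℝ) * (B S : ℝ) := by exact_mod_cast hAsum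
      have h2 : Real.log (A T) ≤ Real.log ((N:ℝ) * (B S:ℝ)) :=
        Real.log_le_log (by exact_mod_cast hAT1) h1
      rwa [Real.log_mul (by positivity) (ne_of_gt hBSpos)] at h2
    -- S > M
    have hSM : M < S := by
      by_contra h
      push_neg at h
      have hBAM : B S ≤ A M := Nat.card_mono (hfin M) (fun γ hγ => le_trans hγ.2 h)
      have hlogBS : Real.log (B S) ≤ K := by
        have : Real.log (B S) ≤ Real.log (A M) := log_nat_mono hBAM
        have h2 : Real.log ((A M : ℝ)) ≤ K := by
          have h3 := log_nat_mono (Nat.le_succ (A M))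
          rw [hK]
          push_cast at h3
          linarith
        linarith
      have hηδ : η ≤ δ - ε/2 := min_le_right _ _
      have h4 : η * T ≤ (δ - ε/2) * T := mul_le_mul_of_nonneg_right hηδ hTpos.le
      linarith
    -- final bound
    have hSpos : (0:ℝ) < S := lt_of_lt_of_le (by linarith) (le_of_lt hSM)
    have hlogB : (δ - ε) * T ≤ Real.log (B S) := by
      have hηε : η ≤ ε/2 := min_le_left _ _
      have h0 : η * T ≤ ε/2 * T := mul_le_mul_of_nonneg_right hηε hTpos.le
      have h1 : Real.log T + L ≤ ε/2 * T := by linarith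
      linarith
    have hgS : δ - ε ≤ g S := by
      have hlogBnn : 0 ≤ Real.log (B S) := Real.log_natCast_nonneg _
      have h1 : (δ - ε) ≤ (1/T) * Real.log (B S) := by
        rw [div_mul_eq_mul_div, le_div_iff₀ hTpos]
        linarith
      have h2 : (1/T) * Real.log (B S) ≤ (1/S) * Real.log (B S) := by
        apply mul_le_mul_of_nonneg_right _ hlogBnn
        exact one_div_le_one_div_of_le hSpos hST
      calc δ - ε ≤ (1/T) * Real.log (B S) := h1
        _ ≤ (1/S) * Real.log (B S) := h2
        _ = g S := rfl
    exact ⟨S, le_trans (le_max_left M0 1) (le_of_lt hSM), hgS⟩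
  -- lower bound
  have hlb : δ ≤ limsup g atTop := by
    apply le_of_forall_pos_le_add
    intro ε hε
    set ε' : ℝ := min ε (δ/2) with hε'
    have hε'pos : 0 < ε' := lt_min hε (by linarith)
    have hε'δ : ε' < δ := lt_of_le_of_lt (min_le_right _ _) (by linarith)
    have h1 : δ - ε' ≤ limsup g atTop :=
      le_limsup_of_frequently_le (key ε' hε'pos hε'δ) hgbdd
    have h2 : ε' ≤ ε := min_le_left _ _
    linarith
  linarith
end
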